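/- arXiv:1605.04751 — 3 statements merged into one kernel-verified Lean document; each statement's English description precedes it below -/
import Mathlib

section
/- The pairing on ordered partitions of [n] and [n+1] defined for a non-critical pair (α,β) (appending/removing the final singleton {n+1}, and merging {n+1} rightward/splitting {n+1} leftward) is an involution without fixed points on the union of all ordered partitions of [n] and of [n+1]. -/
/-- An ordered partition of a finite set `S`: a list of pairwise disjoint nonempty
blocks whose union is `S`. -/
def IsOrderedPartition (S : Finset ℕ) (l : List (Finset ℕ)) : Prop :=
  (∀ I ∈ l, I.Nonempty) ∧ l.Pairwise Disjoint ∧ l.foldr (· ∪ ·) ∅ = S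

/-- The non-critical pairing (lower, higher) for a pair `(α, β)` with `β = α ∪ {v}`,
`A` the vertex set of `α`: rules 1/2 (append/delete the final singleton `{v}`) and
rules 3/4 (split `v` out leftward / merge the singleton `{v}` with the following block). -/
def NCPair (v : ℕ) (A : Finset ℕ) (p q : List (Finset ℕ)) : Prop :=
  (IsOrderedPartition A p ∧ q = p ++ [{v}]) ∨
  (∃ l I r, v ∉ I ∧ I.Nonempty ∧ p = l ++ (insert v I :: r) ∧ q = l ++ ({v} :: I :: r))

/-- `p` is the label of a facet (codimension-one face) of the simplex with label `q`:
either merge two adjacent blocks, or delete the last block. -/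
def LabelFacet (p q : List (Finset ℕ)) : Prop :=
  (∃ l I J r, q = l ++ (I :: J :: r) ∧ p = l ++ ((I ∪ J) :: r)) ∨ (∃ I, q = p ++ [I])

/-- A V-path `β₀, α₁, β₁, α₂, …, β_m, α_{m+1}` of a discrete vector field:
`upper i` is `β_i`, `lower i` is `α_{i+1}`; each `α_{i+1}` is a facet of `β_i`,
each `(α_i, β_i)` (for `1 ≤ i ≤ m`) is a pair of the field, and `αᵢ ≠ αᵢ₊₁`. -/
structure VPath {σ : Type} (Facet : σ → σ → Prop) (Pair : σ → σ → Prop) where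
  len : ℕ
  upper : ℕ → σ
  lower : ℕ → σ
  face_step : ∀ i ≤ len, Facet (lower i) (upper i)
  pair_step : ∀ i < len, Pair (lower i) (upper (i+1))
  lower_ne : ∀ i < len, lower i ≠ lower (i+1)

/-- The underlying sequence of simplexes of a V-path. -/
def pathList {σ : Type} {F P : σ → σ → Prop} (Γ : VPath F P) : List σ :=
  (List.range (Γ.len+1)).flatMap (fun i => [Γ.upper i, Γ.lower i])

/-- The length of the greatest common suffix of two lists of blocks. -/
def gcs (p q : List (Finset ℕ)) : ℕ :=
  ((p.reverse.zip q.reverse).takeWhile (fun x => x.1 == x.2)).length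

/-- The list `[n+1, n, …, 1]`. -/
def ordRev (n : ℕ) : List ℕ := (List.range (n+1)).map (fun i => n+1-i)

/-- The label `({n+1}, {n}, …, {1})` of the distinguished simplex `α'`. -/
def alphaPrime (n : ℕ) : List (Finset ℕ) := (ordRev n).map (fun a => ({a} : Finset ℕ))

/-- The critical pairing (lower, higher) relative to a chosen vertex order `o`
(so that `λ(α') = o.map singleton`): with `i` the length of the greatest common
suffix with `λ(α')` and `x` the entry occupying the `(i+1)`-st block from the end
of `λ(α')`, pair by splitting `x` out leftward / merging the singleton `{x}` with
the following block. -/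
def CritPair (o : List ℕ) (p q : List (Finset ℕ)) : Prop :=
  ∃ x l I r, (o.reverse)[gcs q (o.map (fun a => ({a} : Finset ℕ)))]? = some x ∧
    x ∉ I ∧ I.Nonempty ∧ p = l ++ (insert x I :: r) ∧ q = l ++ ({x} :: I :: r)

lemma mem_foldr_union {a : ℕ} {p : List (Finset ℕ)} :
    a ∈ p.foldr (· ∪ ·) (∅ : Finset ℕ) ↔ ∃ B ∈ p, a ∈ B := by
  induction p with
  | nil => simp
  | cons B t ih => simp [ih]

lemma foldr_union_init (p : List (Finset ℕ)) (s : Finset ℕ) :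
    p.foldr (· ∪ ·) s = p.foldr (· ∪ ·) ∅ ∪ s := by
  induction p with
  | nil => simp
  | cons B t ih => simp [ih, Finset.union_assoc]

lemma foldr_split (l r : List (Finset ℕ)) (v : ℕ) (I : Finset ℕ) :
    (l ++ ({v} :: I :: r)).foldr (· ∪ ·) (∅:Finset ℕ) = (l ++ (insert v I :: r)).foldr (· ∪ ·) ∅ := by
  simp [List.foldr_append, Finset.insert_eq, Finset.union_assoc, -Finset.singleton_union]

lemma op_append {n : ℕ} {p : List (Finset ℕ)} (hp : IsOrderedPartition (Finset.Icc 1 n) p) :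
    IsOrderedPartition (Finset.Icc 1 (n+1)) (p ++ [({n+1} : Finset ℕ)]) := by
  obtain ⟨h1, h2, h3⟩ := hp
  refine ⟨?_, ?_, ?_⟩
  · intro I hI
    rcases List.mem_append.mp hI with h | h
    · exact h1 I h
    · simp at h; subst h; exact ⟨n+1, by simp⟩
  · rw [List.pairwise_append]
    refine ⟨h2, List.pairwise_singleton _ _, ?_⟩
    intro I hI J hJ
    simp only [List.mem_singleton] at hJ; subst hJ
    have hsub : I ⊆ Finset.Icc 1 n := fun a ha => h3 ▸ mem_foldr_union.mpr ⟨I, hI, ha⟩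
    rw [Finset.disjoint_singleton_right]
    intro h; have := hsub h; rw [Finset.mem_Icc] at this; omega
  · rw [List.foldr_append]
    simp only [List.foldr]
    rw [foldr_union_init, h3]
    ext a; simp [Finset.mem_Icc]; omega

lemma pairwise_split {v : ℕ} {I : Finset ℕ} {l r : List (Finset ℕ)} (hvI : v ∉ I)
    (h : (l ++ (insert v I :: r)).Pairwise Disjoint) :
    (l ++ ({v} :: I :: r)).Pairwise Disjoint := by
  rw [List.pairwise_append] at h ⊢
  obtain ⟨hl, hmid, hcross⟩ := h
  rw [List.pairwise_cons] at hmid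
  obtain ⟨hIr, hr⟩ := hmid
  have hsub1 : ({v} : Finset ℕ) ⊆ insert v I := by simp
  have hsub2 : I ⊆ insert v I := Finset.subset_insert _ _
  refine ⟨hl, ?_, ?_⟩
  · rw [List.pairwise_cons]
    constructor
    · intro J hJ
      rcases List.mem_cons.mp hJ with rfl | hJ
      · exact Finset.disjoint_singleton_left.mpr hvI
      · exact Finset.disjoint_of_subset_left hsub1 (hIr J hJ)
    · rw [List.pairwise_cons]
      exact ⟨fun J hJ => Finset.disjoint_of_subset_left hsub2 (hIr J hJ), hr⟩
  · intro a ha b hb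
    rcases List.mem_cons.mp hb with rfl | hb
    · exact Finset.disjoint_of_subset_right hsub1 (hcross a ha _ (by simp))
    · rcases List.mem_cons.mp hb with rfl | hb
      · exact Finset.disjoint_of_subset_right hsub2 (hcross a ha _ (by simp))
      · exact hcross a ha b (by simp [hb])

lemma op_split {S : Finset ℕ} {v : ℕ} {I : Finset ℕ} {l r : List (Finset ℕ)}
    (hvI : v ∉ I) (hIne : I.Nonempty)
    (h : IsOrderedPartition S (l ++ (insert v I :: r))) :
    IsOrderedPartition S (l ++ ({v} :: I :: r)) := by
  obtain ⟨h1, h2, h3⟩ := h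
  refine ⟨?_, pairwise_split hvI h2, by rw [foldr_split]; exact h3⟩
  intro J hJ
  rcases List.mem_append.mp hJ with h | h
  · exact h1 J (by simp [h])
  · rcases List.mem_cons.mp h with rfl | h
    · exact ⟨v, by simp⟩
    · rcases List.mem_cons.mp h with rfl | h
      · exact hIne
      · exact h1 J (by simp [h])

lemma unique_block {v : ℕ} {p l l' : List (Finset ℕ)} {B B' : Finset ℕ} {r r' : List (Finset ℕ)}
    (hp : p.Pairwise Disjoint) (h1 : p = l ++ B :: r) (h2 : p = l' ++ B' :: r')
    (hv : v ∈ B) (hv' : v ∈ B') : l = l' ∧ B = B' ∧ r = r' := by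
  have hl : l.length < p.length := by subst h1; simp
  have hl' : l'.length < p.length := by subst h2; simp
  have hgB : p.get ⟨l.length, hl⟩ = B := by
    subst h1; simp [List.get_eq_getElem, List.getElem_append_right]
  have hgB' : p.get ⟨l'.length, hl'⟩ = B' := by
    subst h2; simp [List.get_eq_getElem, List.getElem_append_right]
  have hpg := List.pairwise_iff_get.mp hp
  have hlen : l.length = l'.length := by
    by_contra hne
    rcases Nat.lt_or_ge l.length l'.length with h | h
    · have hd := hpg ⟨l.length, hl⟩ ⟨l'.length, hl'⟩ h
      rw [hgB, hgB'] at hd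
      exact (Finset.disjoint_left.mp hd hv) hv'
    · have h' : l'.length < l.length := lt_of_le_of_ne h (fun hh => hne hh.symm)
      have hd := hpg ⟨l'.length, hl'⟩ ⟨l.length, hl⟩ h'
      rw [hgB, hgB'] at hd
      exact (Finset.disjoint_left.mp hd hv') hv
  obtain ⟨he1, he2⟩ := List.append_inj (h1.symm.trans h2) hlen
  exact ⟨he1, (List.cons.injEq _ _ _ _ ▸ he2).1, (List.cons.injEq _ _ _ _ ▸ he2).2⟩

/-- The non-critical pairing is a fixed-point-free involution on the union of all
ordered partitions of `[n]` and of `[n+1]`: every such partition has a unique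
partner, the partner is again such a partition, partnership is symmetric (hence an
involution), and no partition is its own partner. -/
theorem ncpair_involution (n : ℕ) (hn : 1 ≤ n) :
    (∀ p : List (Finset ℕ),
      IsOrderedPartition (Finset.Icc 1 n) p ∨ IsOrderedPartition (Finset.Icc 1 (n+1)) p →
      ∃! q : List (Finset ℕ),
        NCPair (n+1) (Finset.Icc 1 n) p q ∨ NCPair (n+1) (Finset.Icc 1 n) q p) ∧
    (∀ p q : List (Finset ℕ), NCPair (n+1) (Finset.Icc 1 n) p q →
      (IsOrderedPartition (Finset.Icc 1 n) p ∨ IsOrderedPartition (Finset.Icc 1 (n+1)) p) →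
      (IsOrderedPartition (Finset.Icc 1 n) q ∨ IsOrderedPartition (Finset.Icc 1 (n+1)) q)) ∧
    (∀ p : List (Finset ℕ), ¬ NCPair (n+1) (Finset.Icc 1 n) p p) := by
  have hvA : (n+1) ∉ Finset.Icc 1 n := by simp [Finset.mem_Icc]
  refine ⟨?_, ?_, ?_⟩
  · -- Part 1 : existence and uniqueness of partner
    intro p hp
    rcases hp with hp | hp
    · -- p is an OP of [n] : partner is p ++ [{n+1}]
      have hvu : (n+1) ∉ p.foldr (· ∪ ·) (∅ : Finset ℕ) := by rw [hp.2.2]; exact hvA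
      refine ⟨p ++ [{n+1}], Or.inl (Or.inl ⟨hp, rfl⟩), ?_⟩
      intro q hq
      rcases hq with (⟨_, hq⟩ | ⟨l, I, r, hvI, hIne, hp', hq⟩) |
        (⟨hop, hq⟩ | ⟨l, I, r, hvI, hIne, hq', hp'⟩)
      · exact hq
      · exact absurd (mem_foldr_union.mpr ⟨insert (n+1) I, by rw [hp']; simp, by simp⟩) hvu
      · exact absurd (mem_foldr_union.mpr ⟨{n+1}, by rw [hq]; simp, by simp⟩) hvu
      · exact absurd (mem_foldr_union.mpr ⟨{n+1}, by rw [hp']; simp, by simp⟩) hvu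
    · -- p is an OP of [n+1] : locate the block containing n+1
      obtain ⟨h1, h2, h3⟩ := hp
      have hvmem : (n+1) ∈ p.foldr (· ∪ ·) (∅ : Finset ℕ) := by
        rw [h3]; simp [Finset.mem_Icc]
      obtain ⟨B, hBp, hvB⟩ := mem_foldr_union.mp hvmem
      obtain ⟨l, r, rfl⟩ := List.append_of_mem hBp
      -- p cannot be an OP of [n]
      have hnotA : ¬ IsOrderedPartition (Finset.Icc 1 n) (l ++ B :: r) := by
        intro h
        have : (n+1) ∈ Finset.Icc 1 n := by
          rw [← h.2.2]; exact mem_foldr_union.mpr ⟨B, hBp, hvB⟩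
        exact hvA this
      by_cases hB : B = ({n+1} : Finset ℕ)
      · subst hB
        cases r with
        | nil =>
          -- last block is {n+1} : partner is l
          have hvl : (n+1) ∉ l.foldr (· ∪ ·) (∅ : Finset ℕ) := by
            intro hmem
            obtain ⟨C, hC, hvC⟩ := mem_foldr_union.mp hmem
            have hcross := (List.pairwise_append.mp h2).2.2 C hC {n+1} (by simp)
            exact (Finset.disjoint_left.mp hcross hvC) (by simp)
          have hopl : IsOrderedPartition (Finset.Icc 1 n) l := by
            refine ⟨fun I hI => h1 I (by simp [hI]), (List.pairwise_append.mp h2).1, ?_⟩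
            have h3' : l.foldr (· ∪ ·) (∅:Finset ℕ) ∪ {n+1} = Finset.Icc 1 (n+1) := by
              rw [← h3, List.foldr_append]
              simp only [List.foldr, Finset.union_empty]
              conv_rhs => rw [foldr_union_init]
            ext a
            have hiff := Finset.ext_iff.mp h3' a
            simp only [Finset.mem_union, Finset.mem_singleton, Finset.mem_Icc] at hiff ⊢
            constructor
            · intro ha
              have h' := hiff.mp (Or.inl ha)
              have hne : a ≠ n+1 := fun hh => hvl (hh ▸ ha)
              omega
            · intro ha
              rcases hiff.mpr ⟨ha.1, by omega⟩ with h | h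
              · exact h
              · omega
          refine ⟨l, Or.inr (Or.inl ⟨hopl, rfl⟩), ?_⟩
          intro q hq
          rcases hq with (⟨hop, hq⟩ | ⟨l', I, r', hvI, hIne, hp', hq⟩) |
            (⟨hop, hq⟩ | ⟨l', I, r', hvI, hIne, hq', hp'⟩)
          · exact absurd hop hnotA
          · obtain ⟨_, hBeq, _⟩ := unique_block (v := n+1) h2 rfl hp' (by simp) (by simp)
            exfalso
            obtain ⟨w, hw⟩ := hIne
            have hwmem : w ∈ insert (n+1) I := Finset.mem_insert_of_mem hw
            rw [← hBeq, Finset.mem_singleton] at hwmem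
            exact hvI (hwmem ▸ hw)
          · obtain ⟨h', -⟩ := List.append_inj hq (by
              have := congrArg List.length hq; simp at this; omega)
            exact h'.symm
          · obtain ⟨_, _, hreq⟩ := unique_block (v := n+1) h2 rfl hp' (by simp) (by simp)
            exact absurd hreq (by simp)
        | cons J r' =>
          -- {n+1} followed by J : partner merges them
          have hvJ : (n+1) ∉ J := by
            intro hvJ
            have := unique_block (v := n+1) h2 rfl
              (show l ++ {n+1} :: J :: r' = (l ++ [{n+1}]) ++ J :: r' by simp) (by simp) hvJ
            have := congrArg List.length this.1
            simp at this
          have hJne : J.Nonempty := h1 J (by simp)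
          refine ⟨l ++ (insert (n+1) J :: r'),
            Or.inr (Or.inr ⟨l, J, r', hvJ, hJne, rfl, rfl⟩), ?_⟩
          intro q hq
          rcases hq with (⟨hop, hq⟩ | ⟨l', I, r'', hvI, hIne, hp', hq⟩) |
            (⟨hop, hq⟩ | ⟨l', I, r'', hvI, hIne, hq', hp'⟩)
          · exact absurd hop hnotA
          · obtain ⟨_, hBeq, _⟩ := unique_block (v := n+1) h2 rfl hp' (by simp) (by simp)
            exfalso
            obtain ⟨w, hw⟩ := hIne
            have hwmem : w ∈ insert (n+1) I := Finset.mem_insert_of_mem hw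
            rw [← hBeq, Finset.mem_singleton] at hwmem
            exact hvI (hwmem ▸ hw)
          · obtain ⟨_, _, hreq⟩ := unique_block (v := n+1) h2 rfl
              (show l ++ {n+1} :: J :: r' = q ++ {n+1} :: [] by simpa using hq) (by simp) (by simp)
            exact absurd hreq (by simp)
          · obtain ⟨hleq, _, hreq⟩ := unique_block (v := n+1) h2 rfl hp' (by simp) (by simp)
            obtain ⟨hI, hr⟩ := List.cons.injEq _ _ _ _ ▸ hreq
            rw [hq', ← hleq, ← hI, ← hr]
      · -- B is not the singleton {n+1} : partner splits n+1 out of B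
        have hIne : (B.erase (n+1)).Nonempty := by
          rw [Finset.nonempty_iff_ne_empty]
          intro h
          rcases (Finset.erase_eq_empty_iff _ _).mp h with h | h
          · exact absurd (h ▸ hvB) (Finset.notMem_empty _)
          · exact hB h
        have hvI : (n+1) ∉ B.erase (n+1) := Finset.notMem_erase _ _
        have hins : insert (n+1) (B.erase (n+1)) = B := Finset.insert_erase hvB
        refine ⟨l ++ ({n+1} :: B.erase (n+1) :: r),
          Or.inl (Or.inr ⟨l, B.erase (n+1), r, hvI, hIne, by rw [hins], rfl⟩), ?_⟩
        intro q hq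
        rcases hq with (⟨hop, hq⟩ | ⟨l', I, r'', hvI', hIne', hp', hq⟩) |
          (⟨hop, hq⟩ | ⟨l', I, r'', hvI', hIne', hq', hp'⟩)
        · exact absurd hop hnotA
        · obtain ⟨hleq, hBeq, hreq⟩ := unique_block (v := n+1) h2 rfl hp' hvB (by simp)
          have hIeq : I = B.erase (n+1) := by
            rw [hBeq, Finset.erase_insert hvI']
          rw [hq, ← hleq, hIeq, ← hreq]
        · exfalso
          obtain ⟨_, hBeq, _⟩ := unique_block (v := n+1) h2 rfl
            (show l ++ B :: r = q ++ {n+1} :: [] by simpa using hq) hvB (by simp)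
          exact hB hBeq
        · exfalso
          obtain ⟨_, hBeq, _⟩ := unique_block (v := n+1) h2 rfl hp' hvB (by simp)
          exact hB hBeq
  · -- Part 2 : partners are ordered partitions
    intro p q hpq hp
    rcases hpq with ⟨hop, hq⟩ | ⟨l, I, r, hvI, hIne, hp', hq⟩
    · right; subst hq; exact op_append hop
    · right
      subst hp'; subst hq
      have hOP' : IsOrderedPartition (Finset.Icc 1 (n+1)) (l ++ insert (n+1) I :: r) := by
        rcases hp with h | h
        · exfalso
          have : (n+1) ∈ Finset.Icc 1 n := by
            rw [← h.2.2]
            exact mem_foldr_union.mpr ⟨insert (n+1) I, by simp, by simp⟩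
          exact hvA this
        · exact h
      exact op_split hvI hIne hOP'
  · -- Part 3 : no fixed points
    intro p h
    rcases h with ⟨_, h⟩ | ⟨l, I, r, _, _, h1, h2⟩
    · have := congrArg List.length h; simp at this
    · have := congrArg List.length (h1.symm.trans h2); simp at this
end

section
/- Let γ be an n-simplex inside Δ(β) with β = [n+1], whose label is a sequence of singletons (I₁,…,I_{n+1}), and suppose I₁ ≠ {n+1}. Then there is exactly one (n−1)-face of γ that is paired with another n-simplex of Δ(β), namely the face whose label is obtained from λ(γ) by merging the singleton {n+1} with the singleton immediately preceding it; it is paired with the n-simplex whose label is obtained from λ(γ) by swapping the singleton {n+1} with the singleton immediately preceding it. -/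

private lemma mem_foldrU {l : List (Finset ℕ)} {a : ℕ} :
    a ∈ l.foldr (· ∪ ·) ∅ ↔ ∃ I ∈ l, a ∈ I := by
  induction l with
  | nil => simp
  | cons h t ih => simp [ih]

private lemma foldrU_merge (l r : List (Finset ℕ)) (A B : Finset ℕ) :
    (l ++ ((A ∪ B) :: r)).foldr (· ∪ ·) ∅ = (l ++ (A :: B :: r)).foldr (· ∪ ·) ∅ := by
  induction l with
  | nil => simp [Finset.union_assoc]
  | cons h t ih => simp [ih]

private lemma uniq_split {α : Type*} {x : α} :
    ∀ {a : List α} {b c d : List α}, x ∉ a → x ∉ c →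
      a ++ x :: b = c ++ x :: d → a = c ∧ b = d := by
  intro a
  induction a with
  | nil =>
    intro b c d _ hc h
    cases c with
    | nil => simpa using h
    | cons y t =>
      simp only [List.nil_append, List.cons_append, List.cons.injEq] at h
      exact absurd (h.1 ▸ (List.mem_cons_self (a := y) (l := t))) hc
  | cons y t ih =>
    intro b c d ha hc h
    cases c with
    | nil =>
      simp only [List.nil_append, List.cons_append, List.cons.injEq] at h
      exact absurd (h.1 ▸ (List.mem_cons_self (a := y) (l := t))) ha
    | cons z s =>
      simp only [List.cons_append, List.cons.injEq] at h
      obtain ⟨rfl, h2⟩ := h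
      have ha' : x ∉ t := fun hx => ha (List.mem_cons_of_mem _ hx)
      have hc' : x ∉ s := fun hx => hc (List.mem_cons_of_mem _ hx)
      obtain ⟨h3, h4⟩ := ih ha' hc' h2
      exact ⟨by rw [h3], h4⟩

/-- Let `γ` be an `n`-simplex interior to `β = [n+1]` whose label consists of
singletons, with `{n+1}` not in first position, say `λ(γ) = l₁ ++ (J :: {n+1} :: l₂)`.
Then the facet obtained by merging `{n+1}` with the preceding singleton `J` is paired
with the `n`-simplex obtained by swapping `{n+1}` and `J`, and this is the only facet
of `γ` paired with another `n`-simplex of `Δ(β)`. -/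
theorem unique_facet_paired_with_other (n : ℕ) (hn : 1 ≤ n)
    (l₁ l₂ : List (Finset ℕ)) (J : Finset ℕ)
    (hpart : IsOrderedPartition (Finset.Icc 1 (n+1)) (l₁ ++ (J :: ({n+1} : Finset ℕ) :: l₂)))
    (hlen : (l₁ ++ (J :: ({n+1} : Finset ℕ) :: l₂)).length = n + 1)
    (hsing : ∀ I ∈ l₁ ++ (J :: ({n+1} : Finset ℕ) :: l₂), I.card = 1) :
    LabelFacet (l₁ ++ (insert (n+1) J :: l₂)) (l₁ ++ (J :: ({n+1} : Finset ℕ) :: l₂)) ∧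
    NCPair (n+1) (Finset.Icc 1 n)
      (l₁ ++ (insert (n+1) J :: l₂)) (l₁ ++ (({n+1} : Finset ℕ) :: J :: l₂)) ∧
    IsOrderedPartition (Finset.Icc 1 (n+1)) (l₁ ++ (({n+1} : Finset ℕ) :: J :: l₂)) ∧
    (∀ p q : List (Finset ℕ),
      LabelFacet p (l₁ ++ (J :: ({n+1} : Finset ℕ) :: l₂)) →
      IsOrderedPartition (Finset.Icc 1 (n+1)) q →
      NCPair (n+1) (Finset.Icc 1 n) p q →
      q ≠ l₁ ++ (J :: ({n+1} : Finset ℕ) :: l₂) →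
      p = l₁ ++ (insert (n+1) J :: l₂) ∧ q = l₁ ++ (({n+1} : Finset ℕ) :: J :: l₂)) := by
  obtain ⟨hne, hdisj, hun⟩ := hpart
  obtain ⟨hd1, hd2, hd3⟩ := List.pairwise_append.mp hdisj
  rw [List.pairwise_cons] at hd2
  obtain ⟨hdJ, hd2'⟩ := hd2
  rw [List.pairwise_cons] at hd2'
  obtain ⟨hdN, hd2''⟩ := hd2'
  have hJ1 : (n+1) ∉ J :=
    Finset.disjoint_singleton_right.mp (hdJ _ List.mem_cons_self)
  have hJne : J.Nonempty := hne J (by simp)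
  have hJN : J ≠ ({n+1} : Finset ℕ) := fun h => hJ1 (h ▸ Finset.mem_singleton_self _)
  have hne₁ : ({n+1} : Finset ℕ) ∉ l₁ := by
    intro h
    have := hd3 _ h ({n+1} : Finset ℕ) (by simp)
    simp at this
  have hne₂ : ({n+1} : Finset ℕ) ∉ l₂ := by
    intro h
    have := hdN _ h
    simp at this
  have part1 : LabelFacet (l₁ ++ (insert (n+1) J :: l₂)) (l₁ ++ (J :: ({n+1} : Finset ℕ) :: l₂)) :=
    Or.inl ⟨l₁, J, {n+1}, l₂, rfl, by rw [Finset.union_comm, ← Finset.insert_eq]⟩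
  have part2 : NCPair (n+1) (Finset.Icc 1 n)
      (l₁ ++ (insert (n+1) J :: l₂)) (l₁ ++ (({n+1} : Finset ℕ) :: J :: l₂)) :=
    Or.inr ⟨l₁, J, l₂, hJ1, hJne, rfl, rfl⟩
  have hperm : (l₁ ++ (J :: ({n+1} : Finset ℕ) :: l₂)).Perm
      (l₁ ++ (({n+1} : Finset ℕ) :: J :: l₂)) :=
    List.Perm.append_left l₁ (List.Perm.swap _ _ _)
  have part3 : IsOrderedPartition (Finset.Icc 1 (n+1)) (l₁ ++ (({n+1} : Finset ℕ) :: J :: l₂)) := by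
    refine ⟨?_, ?_, ?_⟩
    · intro I hI; exact hne I (hperm.mem_iff.mpr hI)
    · exact hdisj.perm hperm (fun h => h.symm)
    · rw [← hun]
      ext a
      simp only [mem_foldrU]
      constructor
      · rintro ⟨I, hI, haI⟩; exact ⟨I, hperm.mem_iff.mpr hI, haI⟩
      · rintro ⟨I, hI, haI⟩; exact ⟨I, hperm.mem_iff.mp hI, haI⟩
  refine ⟨part1, part2, part3, ?_⟩
  intro p q hfacet hqpart hnc hqne
  rcases hnc with ⟨hpp, rfl⟩ | ⟨l, I, r, hvI, hIne, hp, hq⟩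
  · exfalso
    rcases hfacet with ⟨l', A, B, r', hγ, hp'⟩ | ⟨K, hγ⟩
    · have hfp : p.foldr (· ∪ ·) ∅ = Finset.Icc 1 (n+1) := by
        rw [hp', foldrU_merge, ← hγ]; exact hun
      rw [hpp.2.2] at hfp
      have h1 : (n+1) ∈ Finset.Icc 1 n := by
        rw [hfp]; simp only [Finset.mem_Icc]; omega
      simp only [Finset.mem_Icc] at h1
      omega
    · have hun' : (p ++ [K]).foldr (· ∪ ·) ∅ = Finset.Icc 1 (n+1) := by
        rw [← hγ]; exact hun
      have hfp := hpp.2.2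
      have hmem : ∀ a : ℕ, a ∈ Finset.Icc 1 (n+1) ↔ (∃ I ∈ p, a ∈ I) ∨ a ∈ K := by
        intro a
        rw [← hun', mem_foldrU]
        constructor
        · rintro ⟨I, hI, haI⟩
          rcases List.mem_append.mp hI with h | h
          · exact Or.inl ⟨I, h, haI⟩
          · simp only [List.mem_singleton] at h
            exact Or.inr (h ▸ haI)
        · rintro (⟨I, hI, haI⟩ | h)
          · exact ⟨I, List.mem_append_left _ hI, haI⟩
          · exact ⟨K, by simp, h⟩
      have hmemp : ∀ a : ℕ, (∃ I ∈ p, a ∈ I) ↔ a ∈ Finset.Icc 1 n := by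
        intro a
        rw [← hfp]
        exact mem_foldrU.symm
      have hdisj' : (p ++ [K]).Pairwise Disjoint := by rw [← hγ]; exact hdisj
      have hKdisj : ∀ I ∈ p, Disjoint I K := fun I hI =>
        (List.pairwise_append.mp hdisj').2.2 I hI K (by simp)
      have hKN : K = ({n+1} : Finset ℕ) := by
        ext m
        simp only [Finset.mem_singleton]
        constructor
        · intro hm
          have hmIcc : m ∈ Finset.Icc 1 (n+1) := (hmem m).mpr (Or.inr hm)
          by_contra hne'
          have hm2 : m ∈ Finset.Icc 1 n := by
            simp only [Finset.mem_Icc] at hmIcc ⊢; omega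
          obtain ⟨I, hI, hmI⟩ := (hmemp m).mpr hm2
          exact Finset.disjoint_left.mp (hKdisj I hI) hmI hm
        · intro hm
          have h1 : (n+1) ∈ Finset.Icc 1 (n+1) := by
            simp only [Finset.mem_Icc]; omega
          rcases (hmem (n+1)).mp h1 with h | h
          · exact absurd ((hmemp _).mp h) (by simp only [Finset.mem_Icc]; omega)
          · rw [hm]; exact h
      exact hqne (by rw [hγ, hKN])
  · have hX2 : 2 ≤ (insert (n+1) I).card := by
      rw [Finset.card_insert_of_notMem hvI]
      have := Finset.card_pos.mpr hIne
      omega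
    rcases hfacet with ⟨l', A, B, r', hγ, hp'⟩ | ⟨K, hγ⟩
    · -- merge case
      have hsing' : ∀ Y ∈ l' ++ (A :: B :: r'), Y.card = 1 := by
        intro Y hY; apply hsing; rw [hγ]; exact hY
      obtain ⟨a, hA⟩ := Finset.card_eq_one.mp (hsing' A (by simp))
      obtain ⟨b, hB⟩ := Finset.card_eq_one.mp (hsing' B (by simp))
      have hdisjγ : (l' ++ (A :: B :: r')).Pairwise Disjoint := by rw [← hγ]; exact hdisj
      have hAB : Disjoint A B :=
        (List.pairwise_cons.mp (List.pairwise_append.mp hdisjγ).2.1).1 B (by simp)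
      have hab : a ≠ b := by
        intro h; rw [hA, hB, h] at hAB; simp at hAB
      have hXl' : insert (n+1) I ∉ l' := by
        intro h
        have := hsing' _ (List.mem_append_left _ h)
        omega
      have hXr' : insert (n+1) I ∉ r' := by
        intro h
        have := hsing' (insert (n+1) I) (by simp [h])
        omega
      have hXp : insert (n+1) I ∈ p := by rw [hp]; simp
      have hXAB : insert (n+1) I = A ∪ B := by
        rw [hp'] at hXp
        rcases List.mem_append.mp hXp with h | h
        · exact absurd h hXl'
        · rcases List.mem_cons.mp h with h | h
          · exact h
          · exact absurd h hXr'
      have hp'' : p = l' ++ (insert (n+1) I :: r') := by rw [hp', hXAB]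
      have hc : List.count (insert (n+1) I) p = 1 := by
        rw [hp'', List.count_append, List.count_cons,
          List.count_eq_zero.mpr hXl', List.count_eq_zero.mpr hXr']
        simp
      have hXlr : insert (n+1) I ∉ l ∧ insert (n+1) I ∉ r := by
        rw [hp, List.count_append, List.count_cons] at hc
        simp only [beq_self_eq_true, if_true] at hc
        constructor <;> exact List.count_eq_zero.mp (by omega)
      obtain ⟨hll', hrr'⟩ := uniq_split hXlr.1 hXl' (hp.symm.trans hp'')
      rw [hll'] at hp hq
      rw [hrr'] at hp hq
      have hNAB : (n+1) ∈ A ∪ B := by rw [← hXAB]; simp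
      rw [hA, hB] at hNAB
      simp only [Finset.mem_union, Finset.mem_singleton] at hNAB
      rcases hNAB with h | h
      · exfalso
        have hI : I = {b} := by
          ext m
          simp only [Finset.mem_singleton]
          constructor
          · intro hm
            have hm' : m ∈ A ∪ B := by rw [← hXAB]; simp [hm]
            rw [hA, hB] at hm'
            simp only [Finset.mem_union, Finset.mem_singleton] at hm'
            rcases hm' with h' | h'
            · exfalso; apply hvI; rwa [h', ← h] at hm
            · exact h'
          · intro hm
            have hbAB : b ∈ A ∪ B := by rw [hB]; simp
            rw [← hXAB] at hbAB
            rcases Finset.mem_insert.mp hbAB with h' | h'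
            · exact absurd (by omega : a = b) hab
            · rw [hm]; exact h'
        apply hqne
        rw [hq, hγ, hI, hA, hB, ← h]
      · have hI : I = {a} := by
          ext m
          simp only [Finset.mem_singleton]
          constructor
          · intro hm
            have hm' : m ∈ A ∪ B := by rw [← hXAB]; simp [hm]
            rw [hA, hB] at hm'
            simp only [Finset.mem_union, Finset.mem_singleton] at hm'
            rcases hm' with h' | h'
            · exact h'
            · exfalso; apply hvI; rwa [h', ← h] at hm
          · intro hm
            have haAB : a ∈ A ∪ B := by rw [hA]; simp
            rw [← hXAB] at haAB
            rcases Finset.mem_insert.mp haAB with h' | h'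
            · exact absurd (by omega : a = b) hab
            · rw [hm]; exact h'
        have hsaN : ({a} : Finset ℕ) ≠ ({n+1} : Finset ℕ) := by
          intro hh
          have h2 : a ∈ ({n+1} : Finset ℕ) := hh ▸ Finset.mem_singleton_self a
          simp only [Finset.mem_singleton] at h2
          omega
        have hγ2 : l₁ ++ (J :: ({n+1} : Finset ℕ) :: l₂)
            = l' ++ (({a} : Finset ℕ) :: ({n+1} : Finset ℕ) :: r') := by
          rw [hγ, hA, hB, ← h]
        have hcount : List.count ({n+1} : Finset ℕ)
            (l₁ ++ (J :: ({n+1} : Finset ℕ) :: l₂)) = 1 := by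
          simp [List.count_append, List.count_cons, List.count_eq_zero.mpr hne₁,
            List.count_eq_zero.mpr hne₂, hJN]
        have hnml' : ({n+1} : Finset ℕ) ∉ l' := by
          rw [hγ2] at hcount
          simp [List.count_append, List.count_cons, hsaN] at hcount
          exact List.count_eq_zero.mp (by omega)
        have hnm1 : ({n+1} : Finset ℕ) ∉ l' ++ [({a} : Finset ℕ)] := by
          simp only [List.mem_append, List.mem_singleton]
          rintro (h' | h')
          · exact hnml' h'
          · exact hsaN h'.symm
        have hnm2 : ({n+1} : Finset ℕ) ∉ l₁ ++ [J] := by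
          simp only [List.mem_append, List.mem_singleton]
          rintro (h' | h')
          · exact hne₁ h'
          · exact hJN h'.symm
        have hγ' : (l' ++ [({a} : Finset ℕ)]) ++ ({n+1} : Finset ℕ) :: r'
            = (l₁ ++ [J]) ++ ({n+1} : Finset ℕ) :: l₂ := by
          rw [List.append_assoc, List.append_assoc]
          simp only [List.singleton_append]
          exact hγ2.symm
        obtain ⟨hpre, hsuf⟩ := uniq_split hnm1 hnm2 hγ'
        obtain ⟨hl1, hJa⟩ : l' = l₁ ∧ ({a} : Finset ℕ) = J := by
          simpa using List.append_inj' hpre rfl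
        constructor
        · rw [hp, hI, hJa, hl1, hsuf]
        · rw [hq, hI, hJa, hl1, hsuf]
    · exfalso
      have hXγ : insert (n+1) I ∈ l₁ ++ (J :: ({n+1} : Finset ℕ) :: l₂) := by
        rw [hγ, hp]; simp
      have := hsing _ hXγ
      omega
end

section
/- Let β = [n+1] and let γ be the n-simplex of Δ(β) whose label (I₁,…,I_{n+1}) consists of singletons with I₁ = {n+1}. Then no (n−1)-face of γ lying in the interior of β is paired with an n-simplex of Δ(β). -/
private lemma mem_foldr_union_s8 {l : List (Finset ℕ)} {x : ℕ} :
    x ∈ l.foldr (· ∪ ·) ∅ ↔ ∃ I ∈ l, x ∈ I := by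
  induction l with
  | nil => simp
  | cons a t ih => simp [ih]

private lemma facet_len {p q : List (Finset ℕ)} (h : LabelFacet p q) :
    p.length + 1 = q.length := by
  rcases h with ⟨l, I, J, r, hq, hp⟩ | ⟨I, hq⟩
  · subst hq; subst hp; simp; omega
  · subst hq; simp

/-- Let `γ` be the `n`-simplex interior to `β = [n+1]` whose label consists of
singletons with first block `{n+1}`. Then no facet of `γ` lying in the interior of
`β` is paired with an `n`-simplex of `Δ(β)` other than `γ` itself. -/
theorem no_facet_paired_with_other (n : ℕ) (hn : 1 ≤ n) (rest : List (Finset ℕ))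
    (hpart : IsOrderedPartition (Finset.Icc 1 (n+1)) (({n+1} : Finset ℕ) :: rest))
    (hlen : (({n+1} : Finset ℕ) :: rest).length = n + 1)
    (hsing : ∀ I ∈ ({n+1} : Finset ℕ) :: rest, I.card = 1) :
    ∀ p : List (Finset ℕ), LabelFacet p (({n+1} : Finset ℕ) :: rest) →
      p.foldr (· ∪ ·) ∅ = Finset.Icc 1 (n+1) →
      ∀ q : List (Finset ℕ), IsOrderedPartition (Finset.Icc 1 (n+1)) q →
        q.length = n + 1 → q ≠ ({n+1} : Finset ℕ) :: rest →
        ¬ (NCPair (n+1) (Finset.Icc 1 n) p q ∨ NCPair (n+1) (Finset.Icc 1 n) q p) := by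
  intro p hfacet hpunion q hqpart hqlen hqne hpair
  obtain ⟨hne, hdisj, hunion⟩ := hpart
  have hplen : p.length + 1 = n + 1 := by rw [facet_len hfacet]; exact hlen
  rcases hpair with hnc | hnc
  · -- NCPair p q
    rcases hnc with ⟨⟨_, _, hpu⟩, _⟩ | ⟨l, I, r, hvI, hIne, hp, hq⟩
    · -- rule 1/2: p would be a partition of Icc 1 n, contradiction with union
      have h2 : Finset.Icc 1 n = Finset.Icc 1 (n+1) := by rw [← hpu, hpunion]
      have hmem : n + 1 ∈ Finset.Icc 1 (n+1) := Finset.mem_Icc.2 ⟨by omega, le_refl _⟩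
      rw [← h2, Finset.mem_Icc] at hmem
      omega
    · -- rule 3/4
      rcases hfacet with ⟨l', I', J', r', hγ, hp'⟩ | ⟨I₀, hγ⟩
      · -- merge facet
        -- the block insert (n+1) I has card ≥ 2; all blocks of l', r' have card 1
        have hBcard : 2 ≤ (insert (n+1) I).card := by
          rw [Finset.card_insert_of_notMem hvI]
          have := Finset.card_pos.2 hIne
          omega
        have hl'card : ∀ X ∈ l', X.card = 1 := by
          intro X hX
          exact hsing X (by rw [hγ]; exact List.mem_append_left _ hX)
        have hr'card : ∀ X ∈ r', X.card = 1 := by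
          intro X hX
          apply hsing X
          rw [hγ]
          exact List.mem_append_right _
            (List.mem_cons_of_mem _ (List.mem_cons_of_mem _ hX))
        have hpp : l ++ (insert (n+1) I :: r) = l' ++ ((I' ∪ J') :: r') := by
          rw [← hp, ← hp']
        have hlenp : l.length < (l ++ (insert (n+1) I :: r)).length := by simp
        have hget : (l ++ (insert (n+1) I :: r))[l.length]? = some (insert (n+1) I) := by
          rw [List.getElem?_append_right (le_refl _)]
          simp
        have hll' : l.length = l'.length := by
          rcases Nat.lt_trichotomy l.length l'.length with h | h | h
          · rw [hpp, List.getElem?_append_left h] at hget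
            have := hl'card _ (List.mem_of_getElem? hget)
            omega
          · exact h
          · rw [hpp, List.getElem?_append_right (le_of_lt h)] at hget
            have h1 : l.length - l'.length = (l.length - l'.length - 1) + 1 := by omega
            rw [h1] at hget
            simp only [List.getElem?_cons_succ] at hget
            have := hr'card _ (List.mem_of_getElem? hget)
            omega
        obtain ⟨hleq, hreq⟩ := List.append_inj hpp hll'
        have hBeq : insert (n+1) I = I' ∪ J' := by
          injection hreq with h1 h2
        have hrr' : r = r' := by
          injection hreq with h1 h2
        -- show l' = []
        rcases l' with _ | ⟨x, t⟩
        · simp only [List.nil_append] at hγ hleq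
          obtain ⟨h1, hrest⟩ := List.cons_eq_cons.mp hγ
          have hI' : I' = {n+1} := h1.symm
          have hnJ' : (n+1) ∉ J' := by
            have hd := (List.pairwise_cons.1 hdisj).1
            have : Disjoint ({n+1} : Finset ℕ) J' :=
              hd J' (by simp [hrest])
            intro hmem
            exact (Finset.disjoint_left.1 this (Finset.mem_singleton_self _)) hmem
          have hIJ' : I = J' := by
            have hsame : insert (n+1) I = insert (n+1) J' := by
              rw [hBeq, hI', Finset.insert_eq]
            calc I = (insert (n+1) I).erase (n+1) := (Finset.erase_insert hvI).symm
              _ = (insert (n+1) J').erase (n+1) := by rw [hsame]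
              _ = J' := Finset.erase_insert hnJ'
          apply hqne
          rw [hq, hleq, hIJ', hrr', hrest]
          simp
        · rw [List.cons_append] at hγ
          injection hγ with h1 h2
          have hI'mem : I' ∈ rest := by
            rw [h2]; exact List.mem_append_right _ List.mem_cons_self
          have hJ'mem : J' ∈ rest := by
            rw [h2]
            exact List.mem_append_right _ (List.mem_cons_of_mem _ List.mem_cons_self)
          have hd := (List.pairwise_cons.1 hdisj).1
          have h3 : (n+1) ∈ I' ∪ J' := by rw [← hBeq]; exact Finset.mem_insert_self _ _
          rcases Finset.mem_union.1 h3 with h4 | h4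
          · exact Finset.disjoint_left.1 (hd I' hI'mem) (Finset.mem_singleton_self _) h4
          · exact Finset.disjoint_left.1 (hd J' hJ'mem) (Finset.mem_singleton_self _) h4
      · -- drop facet: contradiction with interior (union)
        have hI₀mem : I₀ ∈ ({n+1} : Finset ℕ) :: rest := by
          rw [hγ]; exact List.mem_append_right _ List.mem_cons_self
        obtain ⟨a, ha⟩ := hne I₀ hI₀mem
        have haU : a ∈ Finset.Icc 1 (n+1) := by
          rw [← hunion]; exact mem_foldr_union_s8.2 ⟨I₀, hI₀mem, ha⟩
        rw [← hpunion] at haU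
        obtain ⟨B, hB, haB⟩ := mem_foldr_union_s8.1 haU
        rw [hγ] at hdisj
        have := (List.pairwise_append.1 hdisj).2.2 B hB I₀ List.mem_cons_self
        exact (Finset.disjoint_left.1 this haB) ha
  · -- NCPair q p : length contradiction
    rcases hnc with ⟨_, hpq⟩ | ⟨l, I, r, _, _, hq2, hp2⟩
    · rw [hpq] at hplen; simp at hplen; omega
    · rw [hp2] at hplen
      rw [hq2] at hqlen
      simp at hplen hqlen
      omega
end
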